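/- Let β ∈ (0, 1/100), let Q be an axis-parallel square of sidelength 4^{−j}, subdivided into 4^{10} dyadic subsquares of sidelength 4^{−j−10} arranged in the pattern of the product Cantor construction restricted to the four corner quarters (i.e., the subsquares of K_{j+10} × K_{j+10} contained in Q when Q is a square of K_j × K_j). If a set E ⊆ ℝ² intersects Q and intersects all 4^{10} of these subsquares, then for every line l in ℝ², sup_{x ∈ E ∩ 3Q} dist(x, l) ≥ 0.01·diam(3Q)/2, i.e., the Jones β-number satisfies β_E(3Q) ≥ 0.01. -/

import Mathlib

/-- Euclidean distance on ℝ × ℝ. -/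
noncomputable def dist2 (x y : ℝ × ℝ) : ℝ :=
  Real.sqrt ((x.1 - y.1) ^ 2 + (x.2 - y.2) ^ 2)

/-- The relative positions within a unit square of the `2^10` Cantor intervals of the
tenth generation of the middle-half Cantor construction. -/
def cantorOffsets : Set ℝ :=
  {x | ∃ d : Fin 10 → Bool,
    x = ∑ i : Fin 10, (if d i then (3 : ℝ) else 0) * (4 : ℝ) ^ (-((i : ℤ) + 1))}

/-!
Four of the Cantor subsquares sit in the corners of `Q`, so `E` has a point near each corner.
A line is transversal to one of the two diagonals of `Q` (its normal makes an angle of at most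
`π/4` with that diagonal), so the affine function "signed distance to the line" changes by about
`sidelength(Q)` between the two ends of that diagonal, and one of the two corner points of `E`
lies at distance about `sidelength(Q)/2` from the line, far more than `0.01 · diam(3Q)/2`.
-/

/-- For `v ≠ 0`, `|cross v u| / √(v.1 ^ 2 + v.2 ^ 2)` is the distance from `u` to the line
`ℝ • v`. -/
def cross (v u : ℝ × ℝ) : ℝ := v.1 * u.2 - v.2 * u.1

noncomputable def distToLine (p v x : ℝ × ℝ) : ℝ :=
  sInf {e : ℝ | ∃ t : ℝ, e = dist2 x (p + t • v)}

def closedSquare (c : ℝ × ℝ) (r : ℝ) : Set (ℝ × ℝ) :=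
  Set.Icc c.1 (c.1 + r) ×ˢ Set.Icc c.2 (c.2 + r)

lemma cross_sub (v u w : ℝ × ℝ) : cross v (u - w) = cross v u - cross v w := by
  simp only [cross, Prod.fst_sub, Prod.snd_sub]; ring

lemma cross_smul_self (v : ℝ × ℝ) (t : ℝ) : cross v (t • v) = 0 := by
  simp only [cross, Prod.smul_fst, Prod.smul_snd, smul_eq_mul]; ring

lemma abs_cross_le (v u : ℝ × ℝ) :
    |cross v u| ≤ √(v.1 ^ 2 + v.2 ^ 2) * √(u.1 ^ 2 + u.2 ^ 2) := by
  rw [← Real.sqrt_mul (by positivity), ← Real.sqrt_sq_eq_abs]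
  apply Real.sqrt_le_sqrt
  simp only [cross]
  nlinarith [sq_nonneg (v.1 * u.1 + v.2 * u.2)]

lemma abs_cross_sub_cross_le (v u w : ℝ × ℝ) {ε : ℝ} (h₁ : |u.1 - w.1| ≤ ε)
    (h₂ : |u.2 - w.2| ≤ ε) : |cross v u - cross v w| ≤ 2 * ε * √(v.1 ^ 2 + v.2 ^ 2) := by
  have hv₁ : |v.1| ≤ √(v.1 ^ 2 + v.2 ^ 2) :=
    Real.abs_le_sqrt (le_add_of_nonneg_right (sq_nonneg _))
  have hv₂ : |v.2| ≤ √(v.1 ^ 2 + v.2 ^ 2) :=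
    Real.abs_le_sqrt (le_add_of_nonneg_left (sq_nonneg _))
  have hε : 0 ≤ ε := (abs_nonneg _).trans h₁
  calc |cross v u - cross v w| = |v.1 * (u.2 - w.2) - v.2 * (u.1 - w.1)| := by
        simp only [cross]; ring_nf
    _ ≤ |v.1| * |u.2 - w.2| + |v.2| * |u.1 - w.1| := by
        rw [← abs_mul, ← abs_mul]; exact abs_sub _ _
    _ ≤ √(v.1 ^ 2 + v.2 ^ 2) * ε + √(v.1 ^ 2 + v.2 ^ 2) * ε := by gcongr
    _ = 2 * ε * √(v.1 ^ 2 + v.2 ^ 2) := by ring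

/-- `(a - b) ^ 2 + (a + b) ^ 2 = 2 (a ^ 2 + b ^ 2)`. -/
lemma sqrt_sq_add_sq_le_abs_sub_or_abs_add (a b : ℝ) :
    √(a ^ 2 + b ^ 2) ≤ |a - b| ∨ √(a ^ 2 + b ^ 2) ≤ |a + b| := by
  simp only [← Real.sqrt_sq_eq_abs]
  rcases le_total ((a - b) ^ 2) ((a + b) ^ 2) with h | h
  · right; exact Real.sqrt_le_sqrt (by nlinarith)
  · left; exact Real.sqrt_le_sqrt (by nlinarith)

lemma abs_cross_sub_le_mul_dist2 (p v x : ℝ × ℝ) (t : ℝ) :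
    |cross v (x - p)| ≤ √(v.1 ^ 2 + v.2 ^ 2) * dist2 x (p + t • v) :=
  calc |cross v (x - p)| = |cross v (x - (p + t • v))| := by
        rw [sub_add_eq_sub_sub, cross_sub _ (x - p), cross_smul_self, sub_zero]
    _ ≤ _ := abs_cross_le v _

lemma le_distToLine_of_mul_le_abs_cross {p v x : ℝ × ℝ} {c : ℝ} (hv : v ≠ 0)
    (h : c * √(v.1 ^ 2 + v.2 ^ 2) ≤ |cross v (x - p)|) : c ≤ distToLine p v x := by
  have hn : 0 < √(v.1 ^ 2 + v.2 ^ 2) := by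
    apply Real.sqrt_pos.mpr
    have : v.1 ≠ 0 ∨ v.2 ≠ 0 := by contrapose! hv; exact Prod.ext hv.1 hv.2
    rcases this with h | h <;> positivity
  refine le_csInf ⟨_, 0, rfl⟩ ?_
  rintro e ⟨t, rfl⟩
  have := abs_cross_sub_le_mul_dist2 p v x t
  exact le_of_mul_le_mul_left (by linarith) hn

lemma distToLine_le_dist2 (p v x : ℝ × ℝ) : distToLine p v x ≤ dist2 x p := by
  refine csInf_le ⟨0, ?_⟩ ⟨0, by rw [zero_smul, add_zero]⟩
  rintro e ⟨t, rfl⟩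
  exact Real.sqrt_nonneg _

lemma bddAbove_distToLine_of_isCompact {K : Set (ℝ × ℝ)} (hK : IsCompact K) (E : Set (ℝ × ℝ))
    (p v : ℝ × ℝ) : BddAbove {d : ℝ | ∃ x ∈ E ∩ K, d = distToLine p v x} := by
  obtain ⟨M, hM⟩ := hK.bddAbove_image (f := fun x => dist2 x p) (by unfold dist2; fun_prop)
  refine ⟨M, ?_⟩
  rintro d ⟨x, hx, rfl⟩
  exact (distToLine_le_dist2 p v x).trans (hM ⟨x, hx.2, rfl⟩)

lemma closedSquare_subset_closedSquare {c : ℝ × ℝ} {s t ε r : ℝ} (hs : 0 ≤ s) (hsr : s + ε ≤ r)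
    (ht : 0 ≤ t) (htr : t + ε ≤ r) : closedSquare (c.1 + s, c.2 + t) ε ⊆ closedSquare c r := by
  rintro x ⟨⟨hx₁, hx₁'⟩, hx₂, hx₂'⟩
  exact ⟨⟨by linarith, by linarith⟩, by linarith, by linarith⟩

lemma abs_sub_sub_le_of_mem_closedSquare {c c' x y : ℝ × ℝ} {ε : ℝ} (hx : x ∈ closedSquare c ε)
    (hy : y ∈ closedSquare c' ε) :
    |(y - x).1 - (c' - c).1| ≤ ε ∧ |(y - x).2 - (c' - c).2| ≤ ε := by
  obtain ⟨⟨hx₁, hx₁'⟩, hx₂, hx₂'⟩ := hx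
  obtain ⟨⟨hy₁, hy₁'⟩, hy₂, hy₂'⟩ := hy
  simp only [Prod.fst_sub, Prod.snd_sub, abs_le]
  refine ⟨⟨?_, ?_⟩, ?_, ?_⟩ <;> linarith

/-- The affine function `z ↦ cross v (z - p)` changes by about `cross v (c' - c)` between the
two squares, so it is large at a point of one of them. -/
lemma exists_abs_cross_ge_of_meets_two_squares {S : Set (ℝ × ℝ)} {c c' : ℝ × ℝ} {ε : ℝ}
    (hc : (S ∩ closedSquare c ε).Nonempty) (hc' : (S ∩ closedSquare c' ε).Nonempty)
    (p v : ℝ × ℝ) :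
    ∃ z ∈ S, |cross v (c' - c)| - 2 * ε * √(v.1 ^ 2 + v.2 ^ 2) ≤ 2 * |cross v (z - p)| := by
  obtain ⟨x, hxS, hx⟩ := hc
  obtain ⟨y, hyS, hy⟩ := hc'
  obtain ⟨h₁, h₂⟩ := abs_sub_sub_le_of_mem_closedSquare hx hy
  have happrox := abs_cross_sub_cross_le v _ _ h₁ h₂
  have hdiff : |cross v (y - x)| ≤ |cross v (y - p)| + |cross v (x - p)| := by
    rw [← sub_sub_sub_cancel_right y x p, cross_sub]
    exact abs_sub _ _
  have hfar : |cross v (c' - c)| - 2 * ε * √(v.1 ^ 2 + v.2 ^ 2) ≤ |cross v (y - x)| := by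
    have := abs_sub_abs_le_abs_sub (cross v (c' - c)) (cross v (y - x))
    rw [abs_sub_comm] at this
    linarith
  rcases le_total (|cross v (x - p)|) (|cross v (y - p)|) with h | h
  · exact ⟨y, hyS, by linarith⟩
  · exact ⟨x, hxS, by linarith⟩

lemma exists_abs_cross_ge_of_meets_corners {S : Set (ℝ × ℝ)} {q : ℝ × ℝ} {a ε : ℝ}
    (ha : 0 ≤ a) (hS : ∀ s ∈ ({0, a} : Set ℝ), ∀ t ∈ ({0, a} : Set ℝ),
      (S ∩ closedSquare (q.1 + s, q.2 + t) ε).Nonempty) (p v : ℝ × ℝ) :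
    ∃ z ∈ S, (a - 2 * ε) / 2 * √(v.1 ^ 2 + v.2 ^ 2) ≤ |cross v (z - p)| := by
  have h0 : (0 : ℝ) ∈ ({0, a} : Set ℝ) := Or.inl rfl
  have ha' : a ∈ ({0, a} : Set ℝ) := Or.inr rfl
  suffices h : a * √(v.1 ^ 2 + v.2 ^ 2) ≤ |cross v ((q.1 + a, q.2 + a) - (q.1 + 0, q.2 + 0))| ∨
      a * √(v.1 ^ 2 + v.2 ^ 2) ≤ |cross v ((q.1 + a, q.2 + 0) - (q.1 + 0, q.2 + a))| by
    rcases h with h | h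
    · obtain ⟨z, hz, hfar⟩ :=
        exists_abs_cross_ge_of_meets_two_squares (hS 0 h0 0 h0) (hS a ha' a ha') p v
      exact ⟨z, hz, by linarith⟩
    · obtain ⟨z, hz, hfar⟩ :=
        exists_abs_cross_ge_of_meets_two_squares (hS 0 h0 a ha') (hS a ha' 0 h0) p v
      exact ⟨z, hz, by linarith⟩
  have hdiag : cross v ((q.1 + a, q.2 + a) - (q.1 + 0, q.2 + 0)) = -a * (v.2 - v.1) := by
    simp only [cross, Prod.mk_sub_mk]; ring
  have hantidiag : cross v ((q.1 + a, q.2 + 0) - (q.1 + 0, q.2 + a)) = -a * (v.1 + v.2) := by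
    simp only [cross, Prod.mk_sub_mk]; ring
  rw [hdiag, hantidiag, abs_mul, abs_mul, abs_neg, abs_of_nonneg ha, abs_sub_comm]
  rcases sqrt_sq_add_sq_le_abs_sub_or_abs_add v.1 v.2 with h | h
  · exact Or.inl (mul_le_mul_of_nonneg_left h ha)
  · exact Or.inr (mul_le_mul_of_nonneg_left h ha)

lemma zero_mem_cantorOffsets : (0 : ℝ) ∈ cantorOffsets := ⟨fun _ => false, by simp⟩

lemma one_sub_mem_cantorOffsets : 1 - (4 : ℝ) ^ (-10 : ℤ) ∈ cantorOffsets :=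
  ⟨fun _ => true, by norm_num [Fin.sum_univ_succ]⟩

theorem stmt19_general (j : ℕ) (q : ℝ × ℝ) (E : Set (ℝ × ℝ))
    (hsub : ∀ s ∈ cantorOffsets, ∀ t ∈ cantorOffsets,
      (E ∩ (Set.Icc (q.1 + (4 : ℝ) ^ (-(j : ℤ)) * s)
              (q.1 + (4 : ℝ) ^ (-(j : ℤ)) * s + (4 : ℝ) ^ (-(j : ℤ) - 10)) ×ˢ
            Set.Icc (q.2 + (4 : ℝ) ^ (-(j : ℤ)) * t)
              (q.2 + (4 : ℝ) ^ (-(j : ℤ)) * t + (4 : ℝ) ^ (-(j : ℤ) - 10)))).Nonempty) :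
    ∀ p v : ℝ × ℝ, v ≠ 0 →
      0.01 * (3 * (4 : ℝ) ^ (-(j : ℤ)) * Real.sqrt 2) / 2 ≤
        sSup {d : ℝ | ∃ x ∈ E ∩ (Set.Icc (q.1 - (4 : ℝ) ^ (-(j : ℤ)))
            (q.1 + 2 * (4 : ℝ) ^ (-(j : ℤ))) ×ˢ
          Set.Icc (q.2 - (4 : ℝ) ^ (-(j : ℤ))) (q.2 + 2 * (4 : ℝ) ^ (-(j : ℤ)))),
          d = sInf {e : ℝ | ∃ t : ℝ, e = dist2 x (p + t • v)}} := by
  intro p v hv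
  set L : ℝ := (4 : ℝ) ^ (-(j : ℤ))
  have hL : 0 < L := by positivity
  have hε : (4 : ℝ) ^ (-(j : ℤ) - 10) = L * 4 ^ (-10 : ℤ) := by
    rw [sub_eq_add_neg, zpow_add₀ (by norm_num)]
  set ε : ℝ := L * 4 ^ (-10 : ℤ)
  have hεL : ε = L / 1048576 := by norm_num [ε, div_eq_mul_inv]
  have hcorner : ∀ s ∈ ({0, L - ε} : Set ℝ), ∀ t ∈ ({0, L - ε} : Set ℝ),
      (E ∩ closedSquare q L ∩ closedSquare (q.1 + s, q.2 + t) ε).Nonempty := by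
    have hoffset : ∀ s ∈ ({0, L - ε} : Set ℝ), (∃ s' ∈ cantorOffsets, L * s' = s) ∧
        0 ≤ s ∧ s + ε ≤ L := by
      rintro s (rfl | rfl)
      · exact ⟨⟨0, zero_mem_cantorOffsets, mul_zero L⟩, le_rfl, by linarith⟩
      · exact ⟨⟨_, one_sub_mem_cantorOffsets, by ring⟩, by linarith, by linarith⟩
    intro s hs t ht
    obtain ⟨⟨s', hs', rfl⟩, hs₀, hs₁⟩ := hoffset s hs
    obtain ⟨⟨t', ht', rfl⟩, ht₀, ht₁⟩ := hoffset t ht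
    obtain ⟨x, hxE, hx⟩ := hsub s' hs' t' ht'
    rw [hε] at hx
    exact ⟨x, ⟨hxE, closedSquare_subset_closedSquare hs₀ hs₁ ht₀ ht₁ hx⟩, hx⟩
  obtain ⟨z, ⟨hzE, hzQ⟩, hfar⟩ :=
    exists_abs_cross_ge_of_meets_corners (by linarith) hcorner p v
  have hz : z ∈ E ∩ (Set.Icc (q.1 - L) (q.1 + 2 * L) ×ˢ Set.Icc (q.2 - L) (q.2 + 2 * L)) := by
    obtain ⟨⟨hz₁, hz₁'⟩, hz₂, hz₂'⟩ := hzQ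
    exact ⟨hzE, ⟨by linarith, by linarith⟩, by linarith, by linarith⟩
  refine le_trans ?_ (le_csSup (bddAbove_distToLine_of_isCompact
    (isCompact_Icc.prod isCompact_Icc) E p v) ⟨z, hz, rfl⟩)
  refine le_distToLine_of_mul_le_abs_cross hv (le_trans ?_ hfar)
  gcongr
  nlinarith [Real.sq_sqrt (show (0 : ℝ) ≤ 2 by norm_num), Real.sqrt_nonneg 2]

/-- If a set `E` meets a square `Q` of sidelength `4⁻ʲ` and all `4¹⁰` Cantor subsquares
of sidelength `4⁻ʲ⁻¹⁰` of `Q` (arranged in the product Cantor pattern), then no line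
comes within `0.01·diam(3Q)/2` of all of `E ∩ 3Q`: the Jones β-number of `E` on `3Q`
is at least `0.01`. -/
theorem stmt19 (j : ℕ) (q : ℝ × ℝ) (E : Set (ℝ × ℝ))
    (hQ : (E ∩ (Set.Icc q.1 (q.1 + (4 : ℝ) ^ (-(j : ℤ))) ×ˢ
      Set.Icc q.2 (q.2 + (4 : ℝ) ^ (-(j : ℤ))))).Nonempty)
    (hsub : ∀ s ∈ cantorOffsets, ∀ t ∈ cantorOffsets,
      (E ∩ (Set.Icc (q.1 + (4 : ℝ) ^ (-(j : ℤ)) * s)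
              (q.1 + (4 : ℝ) ^ (-(j : ℤ)) * s + (4 : ℝ) ^ (-(j : ℤ) - 10)) ×ˢ
            Set.Icc (q.2 + (4 : ℝ) ^ (-(j : ℤ)) * t)
              (q.2 + (4 : ℝ) ^ (-(j : ℤ)) * t + (4 : ℝ) ^ (-(j : ℤ) - 10)))).Nonempty) :
    ∀ p v : ℝ × ℝ, v ≠ 0 →
      0.01 * (3 * (4 : ℝ) ^ (-(j : ℤ)) * Real.sqrt 2) / 2 ≤
        sSup {d : ℝ | ∃ x ∈ E ∩ (Set.Icc (q.1 - (4 : ℝ) ^ (-(j : ℤ)))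
            (q.1 + 2 * (4 : ℝ) ^ (-(j : ℤ))) ×ˢ
          Set.Icc (q.2 - (4 : ℝ) ^ (-(j : ℤ))) (q.2 + 2 * (4 : ℝ) ^ (-(j : ℤ)))),
          d = sInf {e : ℝ | ∃ t : ℝ, e = dist2 x (p + t • v)}} :=
  stmt19_general j q E hsub
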